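/- arXiv:2405.13510 — 7 statements merged into one kernel-verified Lean document; each statement's English description precedes it below -/
import Mathlib

section
/- If R : X → X is a continuous linear nonexpansive operator with adjoint R*, then Fix R* = Fix R. -/
open RealInnerProductSpace

lemma aux_fix {X : Type*} [NormedAddCommGroup X] [InnerProductSpace ℝ X] [CompleteSpace X]
    (R : X →L[ℝ] X) (hR : ‖R‖ ≤ 1) {x : X} (hx : R x = x) :
    ContinuousLinearMap.adjoint R x = x := by
  set y := ContinuousLinearMap.adjoint R x with hy
  have hinner : (inner ℝ y x : ℝ) = ‖x‖ ^ 2 := by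
    rw [hy, ContinuousLinearMap.adjoint_inner_left, hx, real_inner_self_eq_norm_sq]
  have hny : ‖y‖ ≤ ‖x‖ := by
    calc ‖y‖ ≤ ‖ContinuousLinearMap.adjoint R‖ * ‖x‖ :=
          (ContinuousLinearMap.adjoint R).le_opNorm x
      _ ≤ 1 * ‖x‖ := by gcongr; rwa [LinearIsometryEquiv.norm_map ContinuousLinearMap.adjoint R]
      _ = ‖x‖ := one_mul _
  have hsq : ‖y - x‖ ^ 2 ≤ 0 := by
    have h := norm_sub_sq_real y x
    rw [hinner] at h
    nlinarith [norm_nonneg y, norm_nonneg x]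
  have : ‖y - x‖ = 0 := by nlinarith [norm_nonneg (y - x)]
  exact sub_eq_zero.mp (norm_eq_zero.mp this)

theorem stmt_5 {X : Type*} [NormedAddCommGroup X] [InnerProductSpace ℝ X] [CompleteSpace X]
    (R : X →L[ℝ] X) (hR : ‖R‖ ≤ 1) :
    {x | ContinuousLinearMap.adjoint R x = x} = {x | R x = x} := by
  ext x
  simp only [Set.mem_setOf_eq]
  constructor
  · intro h
    have h2 := aux_fix (ContinuousLinearMap.adjoint R)
      (by rwa [LinearIsometryEquiv.norm_map ContinuousLinearMap.adjoint R]) h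
    rwa [ContinuousLinearMap.adjoint_adjoint] at h2
  · exact aux_fix R hR
end

section
/- If R : X → X is a continuous linear nonexpansive operator with D := Fix R, then the closure of the range of Id − R equals the closure of the range of Id − R*, and both equal the orthogonal complement D⊥. -/
open ContinuousLinearMap

lemma orth_range_eq_ker_adjoint {X : Type*} [NormedAddCommGroup X] [InnerProductSpace ℝ X]
    [CompleteSpace X] (T : X →L[ℝ] X) :
    (LinearMap.range ((T : X →L[ℝ] X) : X →ₗ[ℝ] X))ᗮ = LinearMap.ker ((ContinuousLinearMap.adjoint T : X →L[ℝ] X) : X →ₗ[ℝ] X) := by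
  ext x
  simp only [Submodule.mem_orthogonal, LinearMap.mem_ker, LinearMap.mem_range, ContinuousLinearMap.coe_coe]
  constructor
  · intro h
    have h' : (inner ℝ ((ContinuousLinearMap.adjoint T) x) ((ContinuousLinearMap.adjoint T) x) : ℝ)
        = 0 := by
      rw [ContinuousLinearMap.adjoint_inner_left]
      rw [real_inner_comm]
      exact h _ ⟨_, rfl⟩
    exact inner_self_eq_zero.mp h'
  · rintro h u ⟨y, hy⟩
    rw [← hy, real_inner_comm, ← ContinuousLinearMap.adjoint_inner_left, h, inner_zero_left]

lemma fix_adjoint {X : Type*} [NormedAddCommGroup X] [InnerProductSpace ℝ X]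
    [CompleteSpace X] (R : X →L[ℝ] X) (hR : ‖R‖ ≤ 1) {x : X} (hx : R x = x) :
    (ContinuousLinearMap.adjoint R) x = x := by
  refine eq_of_norm_le_re_inner_eq_norm_sq (𝕜 := ℝ) ?_ ?_
  · calc ‖(ContinuousLinearMap.adjoint R) x‖ ≤ ‖ContinuousLinearMap.adjoint R‖ * ‖x‖ :=
          (ContinuousLinearMap.adjoint R).le_opNorm x
      _ ≤ 1 * ‖x‖ := by
          apply mul_le_mul_of_nonneg_right _ (norm_nonneg x)
          rw [show ‖ContinuousLinearMap.adjoint R‖ = ‖R‖ from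
            LinearIsometryEquiv.norm_map ContinuousLinearMap.adjoint R]
          exact hR
      _ = ‖x‖ := one_mul _
  · simp only [RCLike.re_to_real]
    rw [ContinuousLinearMap.adjoint_inner_left, hx, real_inner_self_eq_norm_sq]

theorem stmt_6 {X : Type*} [NormedAddCommGroup X] [InnerProductSpace ℝ X] [CompleteSpace X]
    (R : X →L[ℝ] X) (hR : ‖R‖ ≤ 1)
    (D : Submodule ℝ X) (hD : D = LinearMap.ker ((ContinuousLinearMap.id ℝ X - R : X →L[ℝ] X) : X →ₗ[ℝ] X)) :
    (LinearMap.range ((ContinuousLinearMap.id ℝ X - R : X →L[ℝ] X) : X →ₗ[ℝ] X)).topologicalClosure = Dᗮ ∧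
    (LinearMap.range ((ContinuousLinearMap.id ℝ X - ContinuousLinearMap.adjoint R : X →L[ℝ] X) : X →ₗ[ℝ] X)).topologicalClosure
      = Dᗮ := by
  have hadj : ContinuousLinearMap.adjoint (ContinuousLinearMap.id ℝ X - R)
      = ContinuousLinearMap.id ℝ X - ContinuousLinearMap.adjoint R := by
    rw [map_sub, ContinuousLinearMap.adjoint_id]
  have hadj' : ContinuousLinearMap.adjoint (ContinuousLinearMap.id ℝ X -
      ContinuousLinearMap.adjoint R) = ContinuousLinearMap.id ℝ X - R := by
    rw [map_sub, ContinuousLinearMap.adjoint_id, ContinuousLinearMap.adjoint_adjoint]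
  have hker : LinearMap.ker ((ContinuousLinearMap.id ℝ X - ContinuousLinearMap.adjoint R : X →L[ℝ] X) : X →ₗ[ℝ] X) = D := by
    ext x
    simp only [hD, LinearMap.mem_ker, ContinuousLinearMap.coe_coe, ContinuousLinearMap.sub_apply,
      ContinuousLinearMap.id_apply, sub_eq_zero]
    constructor
    · intro h
      have := fix_adjoint (ContinuousLinearMap.adjoint R) (by rwa [show ‖ContinuousLinearMap.adjoint R‖ = ‖R‖ from LinearIsometryEquiv.norm_map ContinuousLinearMap.adjoint R]) h.symm
      rw [ContinuousLinearMap.adjoint_adjoint] at this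
      exact this.symm
    · intro h
      exact (fix_adjoint R hR h.symm).symm
  constructor
  · rw [← Submodule.orthogonal_orthogonal_eq_closure, orth_range_eq_ker_adjoint, hadj, hker]
  · rw [← Submodule.orthogonal_orthogonal_eq_closure, orth_range_eq_ker_adjoint, hadj', ← hD]
end

section
/- Let R : X → X be a continuous linear nonexpansive operator with D := Fix R. Then ran(Id − R) is closed if and only if there exists α > 0 such that ‖y − Ry‖ ≥ α‖y‖ for all y ∈ D⊥. -/
set_option maxHeartbeats 1000000 in
theorem stmt_10 {X : Type*} [NormedAddCommGroup X] [InnerProductSpace ℝ X] [CompleteSpace X]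
    (R : X →L[ℝ] X) (hR : ‖R‖ ≤ 1)
    (D : Submodule ℝ X) (hD : D = LinearMap.ker ((ContinuousLinearMap.id ℝ X - R : X →L[ℝ] X) : X →ₗ[ℝ] X)) :
    IsClosed (Set.range (fun x => x - R x)) ↔
      ∃ α > (0 : ℝ), ∀ y ∈ Dᗮ, α * ‖y‖ ≤ ‖y - R y‖ := by
  set T : X →L[ℝ] X := ContinuousLinearMap.id ℝ X - R with hT
  have hTapp : ∀ x, T x = x - R x := fun x => by simp [hT]
  have hDclosed : IsClosed (D : Set X) := by
    rw [hD]; exact ContinuousLinearMap.isClosed_ker T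
  haveI : CompleteSpace D := hDclosed.completeSpace_coe
  haveI : CompleteSpace (Dᗮ : Submodule ℝ X) :=
    (Submodule.isClosed_orthogonal D).completeSpace_coe
  -- key set identity
  have hrange : Set.range (fun x => x - R x) = T '' (Dᗮ : Set X) := by
    apply Set.Subset.antisymm
    · rintro _ ⟨x, rfl⟩
      obtain ⟨d, hd, z, hz, rfl⟩ := D.exists_add_mem_mem_orthogonal x
      have hdz : T d = 0 := by
        have : d ∈ LinearMap.ker (T : X →ₗ[ℝ] X) := hD ▸ hd
        simpa using this
      refine ⟨z, hz, ?_⟩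
      show T z = (d + z) - R (d + z)
      rw [← hTapp (d + z), map_add, hdz, zero_add]
    · rintro _ ⟨z, _, rfl⟩
      exact ⟨z, (hTapp z).symm⟩
  constructor
  · -- closed range → bounded below on Dᗮ
    intro hclosed
    set K : Submodule ℝ X := LinearMap.range (T : X →ₗ[ℝ] X) with hK
    have hKset : (K : Set X) = Set.range (fun x => x - R x) := by
      ext x
      simp only [hK, LinearMap.mem_range, Set.mem_range, ContinuousLinearMap.coe_coe]
      exact ⟨fun ⟨y, h⟩ => ⟨y, by rw [← hTapp]; exact h⟩, fun ⟨y, h⟩ => ⟨y, by rw [ContinuousLinearMap.coe_coe, hTapp]; exact h⟩⟩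
    have hKclosed : IsClosed (K : Set X) := hKset ▸ hclosed
    haveI : CompleteSpace K := hKclosed.completeSpace_coe
    -- S : Dᗮ →L K
    set S : (Dᗮ : Submodule ℝ X) →L[ℝ] K :=
      (T.comp (Dᗮ : Submodule ℝ X).subtypeL).codRestrict K
        (fun y => LinearMap.mem_range_self _ _) with hS
    have hSapp : ∀ y : Dᗮ, (S y : X) = T y := fun y => rfl
    have hinj : LinearMap.ker (S : (Dᗮ : Submodule ℝ X) →ₗ[ℝ] K) = ⊥ := by
      refine LinearMap.ker_eq_bot.mpr fun y z h => ?_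
      have hyz : T (y : X) = T (z : X) := by
        have := congrArg (Subtype.val) h
        simpa [hSapp] using this
      have hmem : ((y : X) - (z : X)) ∈ D := by
        have hker : ((y : X) - (z : X)) ∈ LinearMap.ker (T : X →ₗ[ℝ] X) :=
          LinearMap.mem_ker.mpr (by rw [map_sub, ContinuousLinearMap.coe_coe, hyz, sub_self])
        rwa [← hD] at hker
      have hmem' : ((y : X) - (z : X)) ∈ Dᗮ := Submodule.sub_mem _ y.2 z.2
      have : (y : X) - (z : X) = 0 := by
        have := Submodule.inner_right_of_mem_orthogonal (𝕜 := ℝ) hmem hmem'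
        rwa [inner_self_eq_zero] at this
      exact Subtype.ext (sub_eq_zero.mp this)
    have hsurj : LinearMap.range (S : (Dᗮ : Submodule ℝ X) →ₗ[ℝ] K) = ⊤ := by
      rw [LinearMap.range_eq_top]
      rintro ⟨k, hk⟩
      obtain ⟨x, hx⟩ := hk
      have hk' : k ∈ T '' (Dᗮ : Set X) := by
        rw [← hrange]
        exact ⟨x, by simpa [hTapp] using hx⟩
      obtain ⟨z, hz, hzk⟩ := hk'
      exact ⟨⟨z, hz⟩, Subtype.ext (by simpa [hSapp] using hzk)⟩
    set e := ContinuousLinearEquiv.ofBijective S hinj hsurj with he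
    set C : ℝ := ‖(e.symm : K →L[ℝ] (Dᗮ : Submodule ℝ X))‖ with hC
    have hC0 : 0 ≤ C := norm_nonneg _
    refine ⟨(C + 1)⁻¹, by positivity, fun y hy => ?_⟩
    set yy : (Dᗮ : Submodule ℝ X) := ⟨y, hy⟩ with hyy
    have h1 : ‖y‖ ≤ C * ‖y - R y‖ := by
      have := (e.symm : K →L[ℝ] (Dᗮ : Submodule ℝ X)).le_opNorm (e yy)
      have h2 : e.symm (e yy) = yy := e.symm_apply_apply yy
      have h3 : ‖(e yy : K)‖ = ‖y - R y‖ := by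
        have : ((e yy : K) : X) = T y := by
          rw [he, ContinuousLinearEquiv.coeFn_ofBijective]; rfl
        rw [show ‖(e yy : K)‖ = ‖((e yy : K) : X)‖ from rfl, this, hTapp]
      calc ‖y‖ = ‖yy‖ := rfl
        _ = ‖e.symm (e yy)‖ := by rw [h2]
        _ ≤ C * ‖(e yy : K)‖ := this
        _ = C * ‖y - R y‖ := by rw [h3]
    have h4 : ‖y‖ ≤ (C + 1) * ‖y - R y‖ := by nlinarith [norm_nonneg (y - R y)]
    rw [inv_mul_le_iff₀ (by positivity : (0:ℝ) < C + 1)]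
    linarith [h4]
  · -- bounded below on Dᗮ → closed range
    rintro ⟨α, hα, hbound⟩
    rw [hrange]
    have himg : T '' (Dᗮ : Set X) = Set.range (fun y : (Dᗮ : Submodule ℝ X) => T (y : X)) := by
      ext x
      constructor
      · rintro ⟨z, hz, rfl⟩; exact ⟨⟨z, hz⟩, rfl⟩
      · rintro ⟨z, rfl⟩; exact ⟨z, z.2, rfl⟩
    rw [himg]
    have hanti : AntilipschitzWith (Real.toNNReal α⁻¹)
        (fun y : (Dᗮ : Submodule ℝ X) => T (y : X)) := by
      apply AntilipschitzWith.of_le_mul_dist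
      intro y z
      have hmem : ((y : X) - (z : X)) ∈ Dᗮ := Submodule.sub_mem _ y.2 z.2
      have hb : α * ‖(y : X) - (z : X)‖ ≤ ‖T ((y : X) - (z : X))‖ := by
        rw [hTapp]; exact hbound _ hmem
      have hco : ((Real.toNNReal α⁻¹ : NNReal) : ℝ) = α⁻¹ :=
        Real.coe_toNNReal _ (by positivity)
      have h5 : ‖(y : X) - (z : X)‖ ≤ α⁻¹ * ‖T ((y : X) - (z : X))‖ := by
        calc ‖(y : X) - (z : X)‖ = α⁻¹ * (α * ‖(y : X) - (z : X)‖) := by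
              field_simp
          _ ≤ α⁻¹ * ‖T ((y : X) - (z : X))‖ :=
              mul_le_mul_of_nonneg_left hb (by positivity)
      calc dist y z = ‖(y : X) - (z : X)‖ := by rw [Subtype.dist_eq, dist_eq_norm]
        _ ≤ α⁻¹ * ‖T ((y : X) - (z : X))‖ := h5
        _ = (Real.toNNReal α⁻¹ : ℝ) * dist (T (y : X)) (T (z : X)) := by
              rw [dist_eq_norm, ← map_sub, hco]
    exact hanti.isClosed_range (T.uniformContinuous.comp uniformContinuous_subtype_val)
end

section
/- Let R : X → X be linear nonexpansive with D := Fix R and ran(Id − R) = D⊥, and let T := P_{D⊥}(Id − R)⁻¹P_{D⊥} − (1/2)P_{D⊥}. Then the set-valued inverse of Id − R satisfies (Id − R)⁻¹ = (1/2)Id + T + N_{D⊥}, where N_{D⊥} is the normal cone operator of D⊥ (so N_{D⊥}(x) = D for x ∈ D⊥ and ∅ otherwise). -/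
theorem stmt_11 {X : Type*} [NormedAddCommGroup X] [InnerProductSpace ℝ X] [CompleteSpace X]
    (R : X →L[ℝ] X) (hR : ∀ x, ‖R x‖ ≤ ‖x‖)
    (D : Submodule ℝ X) (hD : D = LinearMap.ker ((ContinuousLinearMap.id ℝ X - R : X →L[ℝ] X) : X →ₗ[ℝ] X))
    (hran : Set.range (fun x => x - R x) = (Dᗮ : Set X))
    (P : X → X) (hP : ∀ x, P x ∈ Dᗮ ∧ x - P x ∈ D)
    (T : X → X)
    (hT : ∀ x u, u - R u = P x → T x = P u - (1/2 : ℝ) • P x) :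
    ∀ x u, u - R u = x ↔ (x ∈ Dᗮ ∧ u - ((1/2 : ℝ) • x + T x) ∈ D) := by
  -- If x ∈ Dᗮ then P x = x
  have hPfix : ∀ x, x ∈ Dᗮ → P x = x := by
    intro x hx
    have h1 := (hP x).1
    have h2 := (hP x).2
    have h3 : x - P x ∈ Dᗮ := Dᗮ.sub_mem hx h1
    have h4 : x - P x = 0 := by
      have := (Submodule.mem_orthogonal D (x - P x)).mp h3 (x - P x) h2
      simpa [inner_self_eq_zero] using this
    exact (sub_eq_zero.mp h4).symm
  -- elements of D are fixed by R
  have hfix : ∀ d ∈ D, d - R d = 0 := by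
    intro d hd
    rw [hD] at hd
    simpa using hd
  intro x u
  constructor
  · intro h
    have hx : x ∈ Dᗮ := by
      have : x ∈ Set.range (fun y => y - R y) := ⟨u, h⟩
      rw [hran] at this; exact this
    have hPx : P x = x := hPfix x hx
    have hTx : T x = P u - (1/2 : ℝ) • x := by
      have := hT x u (by rw [h, hPx])
      rwa [hPx] at this
    refine ⟨hx, ?_⟩
    have heq : u - ((1/2 : ℝ) • x + T x) = u - P u := by rw [hTx]; abel
    rw [heq]
    exact (hP u).2
  · rintro ⟨hx, hu⟩
    have hPx : P x = x := hPfix x hx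
    obtain ⟨u₀, hu₀⟩ : ∃ u₀, u₀ - R u₀ = x := by
      have : x ∈ Set.range (fun y => y - R y) := by rw [hran]; exact hx
      exact this
    have hTx : T x = P u₀ - (1/2 : ℝ) • x := by
      have := hT x u₀ (by rw [hu₀, hPx])
      rwa [hPx] at this
    have hd : u - P u₀ ∈ D := by
      have heq : u - ((1/2 : ℝ) • x + T x) = u - P u₀ := by rw [hTx]; abel
      rwa [heq] at hu
    have h1 : P u₀ - R (P u₀) = x := by
      have h2 := hfix _ (hP u₀).2
      rw [map_sub] at h2
      calc P u₀ - R (P u₀) = (u₀ - R u₀) - ((u₀ - P u₀) - (R u₀ - R (P u₀))) := by abel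
        _ = x := by rw [h2, hu₀]; abel
    have h3 := hfix _ hd
    calc u - R u = ((u - P u₀) - R (u - P u₀)) + (P u₀ - R (P u₀)) := by
          rw [map_sub]; abel
      _ = x := by rw [h3, h1]; abel
end

section
/- Let R : X → X be linear nonexpansive with D := Fix R and ran(Id − R) = D⊥, and let T := P_{D⊥}(Id − R)⁻¹P_{D⊥} − (1/2)P_{D⊥}. If T₀ : X → X satisfies (Id − R)⁻¹ = (1/2)Id + T₀ + N_{D⊥} (as set-valued operators) and P_{D⊥}T₀P_{D⊥} = T₀, then T₀ = T. -/
theorem stmt_13 {X : Type*} [NormedAddCommGroup X] [InnerProductSpace ℝ X] [CompleteSpace X]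
    (R : X →L[ℝ] X) (hR : ∀ x, ‖R x‖ ≤ ‖x‖)
    (D : Submodule ℝ X) (hD : D = LinearMap.ker ((ContinuousLinearMap.id ℝ X - R : X →L[ℝ] X) : X →ₗ[ℝ] X))
    (hran : Set.range (fun x => x - R x) = (Dᗮ : Set X))
    (P : X → X) (hP : ∀ x, P x ∈ Dᗮ ∧ x - P x ∈ D)
    (T : X → X)
    (hT : ∀ x u, u - R u = P x → T x = P u - (1/2 : ℝ) • P x)
    (T₀ : X → X)
    (hT₀inv : ∀ x u, u - R u = x ↔ (x ∈ Dᗮ ∧ u - ((1/2 : ℝ) • x + T₀ x) ∈ D))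
    (hT₀P : ∀ x, P (T₀ (P x)) = T₀ x) :
    T₀ = T := by
  -- uniqueness of the orthogonal decomposition
  have hPuniq : ∀ y q, q ∈ Dᗮ → y - q ∈ D → P y = q := by
    intro y q hq hyq
    have h1 : P y - q ∈ Dᗮ := Submodule.sub_mem _ (hP y).1 hq
    have h2 : P y - q ∈ D := by
      have := D.sub_mem hyq (hP y).2
      have e : (y - q) - (y - P y) = P y - q := by abel
      rwa [e] at this
    have h0 : (inner ℝ (P y - q) (P y - q) : ℝ) = 0 :=
      (Submodule.mem_orthogonal D _).mp h1 _ h2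
    have : P y - q = 0 := inner_self_eq_zero.mp h0
    exact sub_eq_zero.mp this
  funext x
  obtain ⟨u, hu⟩ : ∃ u, u - R u = P x := by
    have hx : P x ∈ (Dᗮ : Set X) := (hP x).1
    rw [← hran] at hx
    exact hx
  have hTx := hT x u hu
  have hmem : u - ((1/2 : ℝ) • P x + T₀ (P x)) ∈ D := ((hT₀inv (P x) u).mp hu).2
  have h1 : P (u - (1/2 : ℝ) • P x) = P u - (1/2 : ℝ) • P x := by
    refine hPuniq _ _ (Submodule.sub_mem _ (hP u).1 (Submodule.smul_mem _ _ (hP x).1)) ?_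
    have e : (u - (1/2 : ℝ) • P x) - (P u - (1/2 : ℝ) • P x) = u - P u := by abel
    rw [e]; exact (hP u).2
  have h2 : P (u - (1/2 : ℝ) • P x) = P (T₀ (P x)) := by
    refine hPuniq _ _ (hP _).1 ?_
    have := D.add_mem hmem (hP (T₀ (P x))).2
    have e : (u - ((1/2 : ℝ) • P x + T₀ (P x))) + (T₀ (P x) - P (T₀ (P x)))
        = (u - (1/2 : ℝ) • P x) - P (T₀ (P x)) := by abel
    rwa [e] at this
  calc T₀ x = P (T₀ (P x)) := (hT₀P x).symm
    _ = P (u - (1/2 : ℝ) • P x) := h2.symm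
    _ = P u - (1/2 : ℝ) • P x := h1
    _ = T x := hTx.symm
end

section
/- Let R : X → X be linear nonexpansive with D := Fix R and ran(Id − R) = D⊥, and let T := P_{D⊥}(Id − R)⁻¹P_{D⊥} − (1/2)P_{D⊥}. Then ((1/2)Id + T)⁻¹ = (Id − R)P_{D⊥} + 2P_D = Id − R + 2P_D. -/
theorem stmt_14 {X : Type*} [NormedAddCommGroup X] [InnerProductSpace ℝ X] [CompleteSpace X]
    (R : X →L[ℝ] X) (hR : ∀ x, ‖R x‖ ≤ ‖x‖)
    (D : Submodule ℝ X) (hD : D = LinearMap.ker ((ContinuousLinearMap.id ℝ X - R : X →L[ℝ] X) : X →ₗ[ℝ] X))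
    (hran : Set.range (fun x => x - R x) = (Dᗮ : Set X))
    (P : X → X) (hP : ∀ x, P x ∈ Dᗮ ∧ x - P x ∈ D)
    (Q : X → X) (hQ : ∀ x, Q x ∈ D ∧ x - Q x ∈ Dᗮ)
    (T : X → X)
    (hT : ∀ x u, u - R u = P x → T x = P u - (1/2 : ℝ) • P x) :
    -- (Id − R)P_{D⊥} + 2P_D = Id − R + 2P_D
    (∀ x, (P x - R (P x)) + (2 : ℝ) • Q x = (x - R x) + (2 : ℝ) • Q x) ∧
    -- ((1/2)Id + T) ∘ (Id − R + 2P_D) = Id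
    (∀ x, (1/2 : ℝ) • ((x - R x) + (2 : ℝ) • Q x) + T ((x - R x) + (2 : ℝ) • Q x) = x) ∧
    -- (Id − R + 2P_D) ∘ ((1/2)Id + T) = Id
    (∀ x, (((1/2 : ℝ) • x + T x) - R ((1/2 : ℝ) • x + T x))
        + (2 : ℝ) • Q ((1/2 : ℝ) • x + T x) = x) := by
  -- R fixes D
  have hfix : ∀ d, d ∈ D → R d = d := by
    intro d hd
    rw [hD, LinearMap.mem_ker] at hd
    have h : d - R d = 0 := hd
    have := sub_eq_zero.mp h
    exact this.symm
  -- x - R x ∈ Dᗮ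
  have hperp : ∀ x : X, x - R x ∈ Dᗮ := by
    intro x
    have : x - R x ∈ Set.range (fun x => x - R x) := ⟨x, rfl⟩
    rwa [hran] at this
  -- D ∩ Dᗮ = 0
  have hzero : ∀ v : X, v ∈ D → v ∈ Dᗮ → v = 0 := by
    intro v hv hv'
    have := (Submodule.mem_orthogonal D v).mp hv' v hv
    exact inner_self_eq_zero.mp this
  -- uniqueness of decomposition
  have hQa : ∀ a b : X, a ∈ D → b ∈ Dᗮ → Q (a + b) = a := by
    intro a b ha hb
    obtain ⟨h1, h2⟩ := hQ (a + b)
    have hmem : Q (a + b) - a ∈ D := Submodule.sub_mem _ h1 ha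
    have hmem' : Q (a + b) - a ∈ Dᗮ := by
      have heq : Q (a + b) - a = b - (a + b - Q (a + b)) := by abel
      rw [heq]; exact Submodule.sub_mem _ hb h2
    exact sub_eq_zero.mp (hzero _ hmem hmem')
  have hPa : ∀ a b : X, a ∈ D → b ∈ Dᗮ → P (a + b) = b := by
    intro a b ha hb
    obtain ⟨h1, h2⟩ := hP (a + b)
    have hmem : P (a + b) - b ∈ Dᗮ := Submodule.sub_mem _ h1 hb
    have hmem' : P (a + b) - b ∈ D := by
      have heq : P (a + b) - b = a - (a + b - P (a + b)) := by abel
      rw [heq]; exact Submodule.sub_mem _ ha h2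
    exact sub_eq_zero.mp (hzero _ hmem' hmem)
  -- P x = x - Q x
  have hPQ : ∀ x : X, P x = x - Q x := by
    intro x
    have := hPa (Q x) (x - Q x) (hQ x).1 (hQ x).2
    rwa [add_sub_cancel] at this
  -- P x - R (P x) = x - R x
  have hcancel : ∀ x : X, P x - R (P x) = x - R x := by
    intro x
    have hR1 : R (x - P x) = x - P x := hfix _ (hP x).2
    have h2 : R x - R (P x) = x - P x := by rw [← map_sub]; exact hR1
    have h3 : R (P x) = R x - (x - P x) := by rw [← h2]; abel
    rw [h3]; abel
  refine ⟨fun x => by rw [hcancel x], ?_, ?_⟩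
  · intro x
    set y := (x - R x) + (2 : ℝ) • Q x with hy
    have hy' : y = ((2 : ℝ) • Q x) + (x - R x) := by rw [hy]; abel
    have hPy : P y = x - R x := by
      rw [hy']; exact hPa _ _ (Submodule.smul_mem _ _ (hQ x).1) (hperp x)
    have hTy : T y = P x - (1/2 : ℝ) • P y := hT y x hPy.symm
    rw [hTy, hPy, hPQ x, hy]
    module
  · intro x
    -- find u with u - R u = P x
    have hmem : P x ∈ Set.range (fun v => v - R v) := by rw [hran]; exact (hP x).1
    obtain ⟨u, hu0⟩ := hmem
    have hu : u - R u = P x := hu0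
    have hTx : T x = P u - (1/2 : ℝ) • P x := hT x u hu
    set z := (1/2 : ℝ) • x + T x with hz
    have hz' : z = (1/2 : ℝ) • (x - P x) + P u := by rw [hz, hTx]; module
    have hQz : Q z = (1/2 : ℝ) • (x - P x) := by
      rw [hz']; exact hQa _ _ (Submodule.smul_mem _ _ (hP x).2) (hP u).1
    have hPz : P z = P u := by
      rw [hz']; exact hPa _ _ (Submodule.smul_mem _ _ (hP x).2) (hP u).1
    have hzR : z - R z = P x := by
      rw [← hcancel z, hPz, hcancel u, hu]
    rw [hzR, hQz]
    module
end

section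
/- Let R : X → X be linear nonexpansive with D := Fix R and ran(Id − R) = D⊥, and T := P_{D⊥}(Id − R)⁻¹P_{D⊥} − (1/2)P_{D⊥}. Then the resolvent J_{2T} = (Id + 2T)⁻¹ equals P_D + (1/2)(Id − R)P_{D⊥}. -/
theorem stmt_15 {X : Type*} [NormedAddCommGroup X] [InnerProductSpace ℝ X] [CompleteSpace X]
    (R : X →L[ℝ] X) (hR : ∀ x, ‖R x‖ ≤ ‖x‖)
    (D : Submodule ℝ X) (hD : D = LinearMap.ker ((ContinuousLinearMap.id ℝ X - R : X →L[ℝ] X) : X →ₗ[ℝ] X))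
    (hran : Set.range (fun x => x - R x) = (Dᗮ : Set X))
    (P : X → X) (hP : ∀ x, P x ∈ Dᗮ ∧ x - P x ∈ D)
    (Q : X → X) (hQ : ∀ x, Q x ∈ D ∧ x - Q x ∈ Dᗮ)
    (T : X → X)
    (hT : ∀ x u, u - R u = P x → T x = P u - (1/2 : ℝ) • P x) :
    -- J_{2T} = (Id + 2T)⁻¹ = P_D + (1/2)(Id − R)P_{D⊥} :
    -- (Id + 2T) ∘ (P_D + (1/2)(Id − R)P_{D⊥}) = Id
    (∀ x, (Q x + (1/2 : ℝ) • (P x - R (P x)))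
        + (2 : ℝ) • T (Q x + (1/2 : ℝ) • (P x - R (P x))) = x) ∧
    -- (P_D + (1/2)(Id − R)P_{D⊥}) ∘ (Id + 2T) = Id
    (∀ x, Q (x + (2 : ℝ) • T x)
        + (1/2 : ℝ) • (P (x + (2 : ℝ) • T x) - R (P (x + (2 : ℝ) • T x))) = x) := by
  -- an element of both D and Dᗮ is zero
  have hzero : ∀ v : X, v ∈ D → v ∈ Dᗮ → v = 0 := by
    intro v hv hv'
    have h := (Submodule.mem_orthogonal D v).mp hv' v hv
    exact inner_self_eq_zero.mp h
  -- uniqueness characterization of P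
  have hPu : ∀ x a : X, a ∈ Dᗮ → x - a ∈ D → P x = a := by
    intro x a ha hxa
    have h1 : P x - a ∈ Dᗮ := Submodule.sub_mem _ (hP x).1 ha
    have h2 : P x - a ∈ D := by
      have he : P x - a = (x - a) - (x - P x) := by abel
      rw [he]
      exact Submodule.sub_mem _ hxa (hP x).2
    exact sub_eq_zero.mp (hzero _ h2 h1)
  -- Q x = x - P x
  have hQeq : ∀ x : X, Q x = x - P x := by
    intro x
    have h : P x = x - Q x := hPu x (x - Q x) (hQ x).2 (by simpa using (hQ x).1)
    rw [h]; abel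
  -- kernel characterization
  have hker : ∀ v : X, v ∈ D → v - R v = 0 := by
    intro v hv
    rw [hD] at hv
    simpa using hv
  -- membership in range
  have hmem : ∀ x : X, P x - R (P x) ∈ Dᗮ := by
    intro x
    have h : P x - R (P x) ∈ Set.range (fun x => x - R x) := ⟨P x, rfl⟩
    rw [hran] at h
    exact h
  constructor
  · intro x
    set y := Q x + (1/2 : ℝ) • (P x - R (P x)) with hy
    have hPy : P y = (1/2 : ℝ) • (P x - R (P x)) := by
      refine hPu y _ (Submodule.smul_mem _ _ (hmem x)) ?_
      have he : y - (1/2 : ℝ) • (P x - R (P x)) = Q x := by rw [hy]; abel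
      rw [he]; exact (hQ x).1
    have hu : ((1/2 : ℝ) • P x) - R ((1/2 : ℝ) • P x) = P y := by
      rw [hPy, map_smul, smul_sub]
    have hTy : T y = P ((1/2 : ℝ) • P x) - (1/2 : ℝ) • P y := hT y _ hu
    have hPuu : P ((1/2 : ℝ) • P x) = (1/2 : ℝ) • P x :=
      hPu _ _ (Submodule.smul_mem _ _ (hP x).1) (by simp)
    rw [hTy, hPuu, hPy, hy, hQeq x]
    module
  · intro x
    obtain ⟨u, hu⟩ : ∃ u : X, u - R u = P x := by
      have h : P x ∈ (Dᗮ : Set X) := (hP x).1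
      rw [← hran] at h
      exact h
    have hTx : T x = P u - (1/2 : ℝ) • P x := hT x u hu
    -- P u - R (P u) = u - R u = P x
    have h2 : (u - P u) - R (u - P u) = 0 := hker _ (hP u).2
    rw [map_sub] at h2
    have h2' : u - P u = R u - R (P u) := sub_eq_zero.mp h2
    have h4 : R (P u) = R u - (u - P u) := by rw [h2']; abel
    have hPux : P u - R (P u) = P x := by rw [h4, ← hu]; abel
    have h5 : R (P u) = P u - P x := by rw [← hPux]; abel
    have hPz : P (x + (2 : ℝ) • T x) = (2 : ℝ) • P u := by
      refine hPu _ _ (Submodule.smul_mem _ _ (hP u).1) ?_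
      have he : x + (2 : ℝ) • T x - (2 : ℝ) • P u = x - P x := by
        rw [hTx]; module
      rw [he]; exact (hP x).2
    rw [hQeq, hPz, map_smul, h5, hTx]
    module
end
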